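/- arXiv:2206.08631 — 5 statements merged into one kernel-verified Lean document; each statement's English description precedes it below -/
import Mathlib

section
/- Let A be a binary matrix with m rows and n columns, and let A' be obtained from A by appending a column of zeros. For any tour (cyclic ordering) v_{i_1},...,v_{i_{n+1}} of the columns of A', its length under the Hamming-distance metric (sum of Hamming distances between cyclically consecutive columns) equals 2·cons1(π(A)), where π is the column permutation of A obtained by reading the tour starting just after the zero column. -/
open Finset
open Fin.NatCast

/-- Extend a row of length `n` by zeros to an `ℕ`-indexed row. -/
def rowExt (n : ℕ) (r : Fin n → Bool) : ℕ → Bool :=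
  fun j => if h : j < n then r ⟨j, h⟩ else false

/-- The number of maximal blocks of consecutive ones in a row. -/
def cons1Row (n : ℕ) (r : Fin n → Bool) : ℕ :=
  ((Finset.range n).filter
    (fun j => rowExt n r j = true ∧ (j = 0 ∨ rowExt n r (j - 1) = false))).card

/-- The total number of maximal blocks of consecutive ones in a binary matrix. -/
def cons1 {m n : ℕ} (A : Fin m → Fin n → Bool) : ℕ :=
  ∑ i, cons1Row n (A i)

/-- Append a column of zeros to the right of a binary matrix. -/
def appendZero {m n : ℕ} (A : Fin m → Fin n → Bool) : Fin m → Fin (n + 1) → Bool :=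
  fun i j => if h : (j : ℕ) < n then A i ⟨j, h⟩ else false

/-- Hamming distance between two columns of a binary matrix. -/
def colHam {m N : ℕ} (B : Fin m → Fin N → Bool) (a b : Fin N) : ℕ :=
  hammingDist (fun i => B i a) (fun i => B i b)
/-!
The length of a tour is the sum, over the rows, of the number of positions where the row changes
value along the cycle. In a cyclic 0/1 sequence the rises 0 → 1 and the falls 1 → 0 are equally
many (shifting the sequence by one step does not change its number of ones), so the changes number
twice the rises. Read from the zero column, the row of the tour is a `0` followed by the
corresponding row of `π(A)`, and its rises are exactly the starts of the blocks of ones of that row.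
-/

section CyclicSequence

variable {α : Type*} [Fintype α] (s : Equiv.Perm α) (g : α → Bool)

theorem card_rises_eq_card_falls :
    #{t | g t = false ∧ g (s t) = true} = #{t | g t = true ∧ g (s t) = false} := by
  have hshift : ∑ t, (g (s t)).toNat = ∑ t, (g t).toNat := Equiv.sum_comp s (fun t => (g t).toNat)
  have hpoint : ∀ t, (if g t = false ∧ g (s t) = true then 1 else 0) + (g t).toNat
      = (if g t = true ∧ g (s t) = false then 1 else 0) + (g (s t)).toNat := by
    intro t
    cases g t <;> cases g (s t) <;> rfl
  have := sum_congr rfl fun t (_ : t ∈ univ) => hpoint t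
  rw [sum_add_distrib, sum_add_distrib, hshift, add_left_inj] at this
  simpa only [card_filter] using this

theorem card_ne_eq_two_mul_card_rises :
    #{t | g t ≠ g (s t)} = 2 * #{t | g t = false ∧ g (s t) = true} := by
  have hpoint : ∀ t, (if g t ≠ g (s t) then 1 else 0)
      = (if g t = false ∧ g (s t) = true then 1 else 0)
        + (if g t = true ∧ g (s t) = false then 1 else 0) := by
    intro t
    cases g t <;> cases g (s t) <;> rfl
  rw [card_filter, sum_congr rfl fun t _ => hpoint t, sum_add_distrib, ← card_filter,
    ← card_filter, ← card_rises_eq_card_falls, two_mul]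

end CyclicSequence

theorem rowExt_val {n : ℕ} (r : Fin n → Bool) (j : Fin n) : rowExt n r j = r j := by
  simp [rowExt]

theorem cons_false_castSucc_eq_false_iff {n : ℕ} (r : Fin n → Bool) (j : Fin n) :
    (Fin.cons false r : Fin (n + 1) → Bool) j.castSucc = false ↔
      (j : ℕ) = 0 ∨ rowExt n r (j - 1) = false := by
  rcases j with ⟨_ | j, hj⟩
  · simp
  · have : (⟨j + 1, hj⟩ : Fin n).castSucc = (⟨j, by omega⟩ : Fin n).succ := rfl
    rw [this, Fin.cons_succ]
    simp [rowExt, show j < n by omega]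

theorem card_rises_cons_false {n : ℕ} (r : Fin n → Bool) :
    #{t : Fin (n + 1) | (Fin.cons false r : Fin (n + 1) → Bool) t = false ∧
      (Fin.cons false r : Fin (n + 1) → Bool) (t + 1) = true} = cons1Row n r := by
  rw [cons1Row, card_filter, card_filter, Fin.sum_univ_castSucc, sum_range, Fin.last_add_one]
  simp only [Fin.cons_zero, Bool.false_eq_true, and_false, if_false, add_zero]
  refine sum_congr rfl fun j _ => ?_
  simp only [Fin.coeSucc_eq_succ, Fin.cons_succ, cons_false_castSucc_eq_false_iff, rowExt_val,
    and_comm]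

theorem appendZero_castSucc {m n : ℕ} (A : Fin m → Fin n → Bool) (i : Fin m) (j : Fin n) :
    appendZero A i j.castSucc = A i j := by
  simp [appendZero]

theorem appendZero_last {m n : ℕ} (A : Fin m → Fin n → Bool) (i : Fin m) :
    appendZero A i (Fin.last n) = false := by
  simp [appendZero]

theorem sum_colHam_eq_sum_card_ne {m N : ℕ} {κ : Type*} [Fintype κ] (B : Fin m → Fin N → Bool)
    (a b : κ → Fin N) :
    ∑ k, colHam B (a k) (b k) = ∑ i, #{k | B i (a k) ≠ B i (b k)} := by
  simp only [colHam, hammingDist, card_filter]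
  exact sum_comm

/-- For any tour of the columns of A' (A with a zero column appended),
its length under the Hamming metric equals 2·cons1(π(A)), where π reads the tour
starting just after the zero column. -/
theorem stmt0 (m n : ℕ) (A : Fin m → Fin n → Bool)
    (σ : Equiv.Perm (Fin (n + 1))) (k₀ : Fin (n + 1))
    (hk : σ k₀ = Fin.last n)
    (π : Equiv.Perm (Fin n))
    (hπ : ∀ j : Fin n, ((σ (k₀ + ((((j : ℕ) + 1 : ℕ)) : Fin (n + 1)))) : ℕ) = (π j : ℕ)) :
    ∑ k : Fin (n + 1), colHam (appendZero A) (σ k) (σ (k + 1)) =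
      2 * cons1 (fun i j => A i (π j)) := by
  set τ : Fin (n + 1) → Fin (n + 1) := fun t => σ (k₀ + t)
  have hrotate : ∑ k, colHam (appendZero A) (σ k) (σ (k + 1))
      = ∑ t, colHam (appendZero A) (τ t) (τ (t + 1)) :=
    (Fintype.sum_equiv (Equiv.addLeft k₀) _ _ fun t => by simp [τ, add_assoc]).symm
  have hrow : ∀ i t,
      appendZero A i (τ t) = (Fin.cons false fun j => A i (π j) : Fin (n + 1) → Bool) t := by
    intro i t
    cases t using Fin.cases with
    | zero => simp [τ, hk, appendZero_last]
    | succ j =>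
      have : τ j.succ = (π j).castSucc := Fin.ext (by simpa [τ] using hπ j)
      rw [this, appendZero_castSucc, Fin.cons_succ]
  rw [hrotate, sum_colHam_eq_sum_card_ne, cons1, mul_sum]
  refine sum_congr rfl fun i _ => ?_
  simp only [hrow i]
  rw [← card_rises_cons_false]
  exact card_ne_eq_two_mul_card_rises (Equiv.addRight 1) _
end

section
/- Let G be a simple graph with vertex set {v_1,...,v_n} and edge set {e_1,...,e_m}, and let A be the m×n incidence matrix of G (A_{j,i}=1 iff v_i ∈ e_j). If G has a Hamiltonian path v_{ℓ_1},...,v_{ℓ_n}, then the column permutation π = (ℓ_1,...,ℓ_n) satisfies cons1(π(A)) ≤ 2m − (n−1). -/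
open Finset

lemma rowExt_lt (n : ℕ) (r : Fin n → Bool) (j : ℕ) (h : j < n) :
    rowExt n r j = r ⟨j, h⟩ := by simp [rowExt, h]

lemma cons1Row_le_two (n : ℕ) (r : Fin n → Bool) (a b : Fin n)
    (h : ∀ i, r i = true → i = a ∨ i = b) : cons1Row n r ≤ 2 := by
  unfold cons1Row
  calc _ ≤ ({(a : ℕ), (b : ℕ)} : Finset ℕ).card := by
        apply Finset.card_le_card
        intro j hj
        simp only [Finset.mem_filter, Finset.mem_range] at hj
        obtain ⟨hjn, hr, -⟩ := hj
        rw [rowExt_lt n r j hjn] at hr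
        rcases h _ hr with h' | h' <;> simp [← h']
    _ ≤ 2 := by
        apply le_trans (Finset.card_insert_le _ _); simp

lemma cons1Row_adj (n : ℕ) (r : Fin n → Bool) (a b : Fin n)
    (hab : (a : ℕ) + 1 = (b : ℕ)) (h : ∀ i, r i = true ↔ (i = a ∨ i = b)) :
    cons1Row n r = 1 := by
  unfold cons1Row
  have : ((Finset.range n).filter
      (fun j => rowExt n r j = true ∧ (j = 0 ∨ rowExt n r (j - 1) = false))) = {(a : ℕ)} := by
    ext j
    simp only [Finset.mem_filter, Finset.mem_range, Finset.mem_singleton]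
    constructor
    · rintro ⟨hjn, hr, hprev⟩
      rw [rowExt_lt n r j hjn] at hr
      rcases (h _).1 hr with h' | h'
      · exact congrArg Fin.val h' ▸ rfl
      · exfalso
        have hj : j = (b : ℕ) := congrArg Fin.val h'
        rcases hprev with h0 | hp
        · omega
        · have hlt : j - 1 < n := by omega
          rw [rowExt_lt n r (j-1) hlt] at hp
          have : r ⟨j-1, hlt⟩ = true := by
            apply (h _).2; left; ext; simp; omega
          simp [this] at hp
    · rintro rfl
      refine ⟨by omega, ?_, ?_⟩
      · rw [rowExt_lt n r _ a.isLt]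
        apply (h _).2; left; rfl
      · rcases Nat.eq_zero_or_pos (a : ℕ) with h0 | hpos
        · left; exact h0
        · right
          have hlt : (a : ℕ) - 1 < n := by omega
          rw [rowExt_lt n r _ hlt]
          by_contra hc
          simp only [Bool.not_eq_false] at hc
          rcases (h _).1 hc with h' | h' <;>
            · have := congrArg Fin.val h'; simp at this; omega
  rw [this]; simp

/-- If G has a Hamiltonian path, the induced column permutation of the
incidence matrix satisfies cons1(π(A)) ≤ 2m − (n−1). -/
theorem stmt1 (n m : ℕ) (G : SimpleGraph (Fin n)) (e : Fin m ≃ G.edgeSet)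
    (A : Fin m → Fin n → Bool)
    (hA : ∀ j i, A j i = true ↔ i ∈ (e j : Sym2 (Fin n)))
    (ℓ : Equiv.Perm (Fin n))
    (hHam : ∀ i : ℕ, (h : i + 1 < n) → G.Adj (ℓ ⟨i, by omega⟩) (ℓ ⟨i + 1, h⟩)) :
    (cons1 (fun j i => A j (ℓ i)) : ℤ) ≤ 2 * (m : ℤ) - ((n : ℤ) - 1) := by
  set B : Fin m → Fin n → Bool := fun j i => A j (ℓ i) with hBdef
  have hrep : ∀ z : Sym2 (Fin n), ∃ x y, z = s(x, y) := by
    intro z; induction z using Sym2.ind with | _ x y => exact ⟨x, y, rfl⟩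
  -- every row has exactly two ones
  have htwo : ∀ j, ∃ a b : Fin n, a ≠ b ∧ ∀ i, B j i = true ↔ (i = a ∨ i = b) := by
    intro j
    obtain ⟨x, y, hxy⟩ := hrep (e j : Sym2 (Fin n))
    have hadj : G.Adj x y := by
      have := (e j).2
      rw [hxy, SimpleGraph.mem_edgeSet] at this
      exact this
    refine ⟨ℓ.symm x, ℓ.symm y, ?_, ?_⟩
    · intro hc
      exact hadj.ne (by have := congrArg ℓ hc; simpa using this)
    · intro i
      rw [hBdef]
      simp only []
      rw [hA j (ℓ i), hxy, Sym2.mem_iff]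
      constructor
      · rintro (h' | h') <;> [left; right] <;>
          · apply ℓ.injective; simp [h']
      · rintro (rfl | rfl) <;> simp
  -- the special rows from the Hamiltonian path
  have hn1lt : ∀ i : Fin (n - 1), (i : ℕ) + 1 < n := by
    intro i; have := i.2; omega
  have hn1lt' : ∀ i : Fin (n - 1), (i : ℕ) < n := by
    intro i; have := i.2; omega
  let f : Fin (n - 1) → Fin m := fun i =>
    e.symm ⟨s(ℓ ⟨(i : ℕ), hn1lt' i⟩, ℓ ⟨(i : ℕ) + 1, hn1lt i⟩),
      G.mem_edgeSet.mpr (hHam i (hn1lt i))⟩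
  have hef : ∀ i, (e (f i) : Sym2 (Fin n)) = s(ℓ ⟨(i : ℕ), hn1lt' i⟩, ℓ ⟨(i : ℕ) + 1, hn1lt i⟩) := by
    intro i; rw [show e (f i) = ⟨_, _⟩ from e.apply_symm_apply _]
  have hfrow : ∀ i, cons1Row n (B (f i)) = 1 := by
    intro i
    apply cons1Row_adj n (B (f i)) ⟨(i : ℕ), hn1lt' i⟩ ⟨(i : ℕ) + 1, hn1lt i⟩ rfl
    intro i'
    rw [hBdef]
    simp only []
    rw [hA (f i) (ℓ i'), hef i, Sym2.mem_iff]
    constructor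
    · rintro (h' | h') <;> [left; right] <;> exact ℓ.injective h'
    · rintro (rfl | rfl) <;> simp
  have hfinj : Function.Injective f := by
    intro i i' hii
    have := congrArg (fun j => (e j : Sym2 (Fin n))) hii
    simp only [hef] at this
    rw [Sym2.eq_iff] at this
    have hv : (i : ℕ) = (i' : ℕ) := by
      rcases this with ⟨h1, h2⟩ | ⟨h1, h2⟩ <;>
        · have e1 := congrArg Fin.val (ℓ.injective h1)
          have e2 := congrArg Fin.val (ℓ.injective h2)
          simp at e1 e2; omega
    exact Fin.ext hv
  set S : Finset (Fin m) := Finset.image f Finset.univ with hS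
  have hScard : S.card = n - 1 := by
    rw [hS, Finset.card_image_of_injective _ hfinj, Finset.card_univ, Fintype.card_fin]
  have hkey : ∀ j : Fin m, cons1Row n (B j) + (if j ∈ S then 1 else 0) ≤ 2 := by
    intro j
    by_cases hj : j ∈ S
    · rw [hS] at hj
      obtain ⟨i, -, rfl⟩ := Finset.mem_image.mp hj
      simp [hfrow i, hj, hS]
    · obtain ⟨a, b, -, hab⟩ := htwo j
      simp only [hj, if_false, add_zero]
      exact cons1Row_le_two n (B j) a b (fun i hi => (hab i).1 hi)
  have hsum : cons1 B + (n - 1) ≤ 2 * m := by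
    have h1 : cons1 B + S.card = ∑ j : Fin m, (cons1Row n (B j) + (if j ∈ S then 1 else 0)) := by
      rw [Finset.sum_add_distrib]
      congr 1
      rw [Finset.sum_ite_mem, Finset.univ_inter, Finset.sum_const, smul_eq_mul, mul_one]
    have h2 : ∑ j : Fin m, (cons1Row n (B j) + (if j ∈ S then 1 else 0)) ≤ ∑ _j : Fin m, 2 :=
      Finset.sum_le_sum (fun j _ => hkey j)
    rw [hScard] at h1
    simp only [Finset.sum_const, Finset.card_univ, Fintype.card_fin, smul_eq_mul] at h2
    omega
  omega
end

section
/- Let G be a simple graph with n vertices and m edges and incidence matrix A. If some permutation π = (ℓ_1,...,ℓ_n) of the columns of A satisfies cons1(π(A)) ≤ 2m − (n−1), then v_{ℓ_1},v_{ℓ_2},...,v_{ℓ_n} is a Hamiltonian path in G, i.e., {v_{ℓ_i}, v_{ℓ_{i+1}}} ∈ E(G) for all 1 ≤ i ≤ n−1. -/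
/-!
Read the edges in the coordinates of the ordering `ℓ`: the row of an edge `{a, b}` in `π(A)` has
its two ones at the positions of `a` and `b`, so it contributes one block if these positions are
consecutive and two otherwise. Hence `cons1(π(A)) = 2m - c`, where `c` is the number of edges
joining consecutive positions. There are only `n - 1` consecutive pairs of positions, so the
hypothesis `c ≥ n - 1` forces every one of them to be an edge.
-/

open Finset

open Function

def consecutivePairs (n : ℕ) : Finset (Sym2 ℕ) :=
  (range (n - 1)).image fun i => s(i, i + 1)

lemma card_consecutivePairs (n : ℕ) : #(consecutivePairs n) = n - 1 := by
  refine (card_image_of_injective _ fun i j hij => ?_).trans (card_range _)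
  simp only [Sym2.eq_iff] at hij
  omega

lemma mk_mem_consecutivePairs_iff {n p q : ℕ} (hpq : p < q) :
    s(p, q) ∈ consecutivePairs n ↔ q = p + 1 ∧ q < n := by
  simp only [consecutivePairs, mem_image, mem_range, Sym2.eq_iff]
  constructor
  · rintro ⟨i, hi, hpair⟩
    omega
  · rintro ⟨rfl, hq⟩
    exact ⟨p, by omega, Or.inl ⟨rfl, rfl⟩⟩

lemma lt_of_rowExt_eq_true {n j : ℕ} {r : Fin n → Bool} (h : rowExt n r j = true) : j < n := by
  by_contra hj
  simp [rowExt, hj] at h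

lemma cons1Row_eq_of_rowExt_iff {n p q : ℕ} {r : Fin n → Bool} (hpq : p < q)
    (hr : ∀ j, rowExt n r j = true ↔ j = p ∨ j = q) :
    cons1Row n r = if q = p + 1 then 1 else 2 := by
  have hfalse : ∀ j, rowExt n r j = false ↔ ¬(j = p ∨ j = q) := fun j => by
    rw [← hr j, Bool.not_eq_true]
  have hq : q < n := lt_of_rowExt_eq_true ((hr q).2 (Or.inr rfl))
  unfold cons1Row
  split_ifs with hadj
  · refine card_eq_one.2 ⟨p, ?_⟩
    ext j
    simp only [mem_filter, mem_range, mem_singleton, hr, hfalse]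
    omega
  · refine card_eq_two.2 ⟨p, q, hpq.ne, ?_⟩
    ext j
    simp only [mem_filter, mem_range, mem_insert, mem_singleton, hr, hfalse]
    omega

lemma cons1Row_eq_of_rowExt_iff_mem {n : ℕ} {r : Fin n → Bool} {z : Sym2 ℕ} (hz : ¬z.IsDiag)
    (hr : ∀ j, rowExt n r j = true ↔ j ∈ z) :
    cons1Row n r = if z ∈ consecutivePairs n then 1 else 2 := by
  induction z using Sym2.ind with | h p q => ?_
  wlog hpq : p < q generalizing p q
  · rw [Sym2.eq_swap] at hz hr ⊢
    exact this q p hz hr (by simp only [Sym2.mk_isDiag_iff] at hz; omega)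
  have hr' : ∀ j, rowExt n r j = true ↔ j = p ∨ j = q := by simpa using hr
  have hq : q < n := lt_of_rowExt_eq_true ((hr' q).2 (Or.inr rfl))
  rw [cons1Row_eq_of_rowExt_iff hpq hr']
  simp only [mk_mem_consecutivePairs_iff hpq, hq, and_true]

lemma cons1_add_card_filter_mem_consecutivePairs {m n : ℕ} (B : Fin m → Fin n → Bool)
    (z : Fin m → Sym2 ℕ) (hz : ∀ j, ¬(z j).IsDiag) (hB : ∀ j k, rowExt n (B j) k = true ↔ k ∈ z j) :
    cons1 B + #{j | z j ∈ consecutivePairs n} = 2 * m := by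
  rw [cons1, card_filter, ← sum_add_distrib]
  calc ∑ j, (cons1Row n (B j) + if z j ∈ consecutivePairs n then 1 else 0)
      = ∑ _j : Fin m, 2 := sum_congr rfl fun j _ => by
        rw [cons1Row_eq_of_rowExt_iff_mem (hz j) (hB j)]
        split_ifs <;> rfl
    _ = 2 * m := by simp [mul_comm]

lemma rowExt_comp_perm_eq_true_iff {n : ℕ} {r : Fin n → Bool} {z : Sym2 (Fin n)}
    (hr : ∀ v, r v = true ↔ v ∈ z) (ℓ : Equiv.Perm (Fin n)) (k : ℕ) :
    rowExt n (fun i => r (ℓ i)) k = true ↔ k ∈ z.map fun v => (ℓ.symm v : ℕ) := by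
  rw [Sym2.mem_map]
  unfold rowExt
  split_ifs with hk
  · rw [hr]
    constructor
    · exact fun h => ⟨_, h, by simp⟩
    · rintro ⟨v, hv, rfl⟩
      simpa using hv
  · simp only [false_iff, not_exists, not_and]
    rintro v - rfl
    exact hk (ℓ.symm v).isLt

lemma Finset.subset_image_of_card_le_card_filter {ι α : Type*} [Fintype ι] [DecidableEq α]
    {f : ι → α} (hf : Injective f) {t : Finset α} (ht : #t ≤ #{i | f i ∈ t}) :
    t ⊆ univ.image f := by
  have hsub : (univ.filter (f · ∈ t)).image f ⊆ t := by
    simp only [image_subset_iff, mem_filter, mem_univ, true_and, imp_self, implies_true]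
  rw [← eq_of_subset_of_card_le hsub (by rwa [card_image_of_injective _ hf])]
  exact image_subset_image (filter_subset _ _)

/-- If a column permutation π of the incidence matrix of G satisfies
cons1(π(A)) ≤ 2m − (n−1), then v_{ℓ_1},...,v_{ℓ_n} is a Hamiltonian path in G. -/
theorem stmt2 (n m : ℕ) (G : SimpleGraph (Fin n)) (e : Fin m ≃ G.edgeSet)
    (A : Fin m → Fin n → Bool)
    (hA : ∀ j i, A j i = true ↔ i ∈ (e j : Sym2 (Fin n)))
    (ℓ : Equiv.Perm (Fin n))
    (h : (cons1 (fun j i => A j (ℓ i)) : ℤ) ≤ 2 * (m : ℤ) - ((n : ℤ) - 1)) :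
    ∀ i : ℕ, (hi : i + 1 < n) → G.Adj (ℓ ⟨i, by omega⟩) (ℓ ⟨i + 1, hi⟩) := by
  classical
  set pos : Fin n → ℕ := fun v => ℓ.symm v
  have hpos : Injective pos := Fin.val_injective.comp ℓ.symm.injective
  set z : Fin m → Sym2 ℕ := fun j => (e j : Sym2 (Fin n)).map pos
  have hz : Injective z := (Sym2.map.injective hpos).comp (Subtype.val_injective.comp e.injective)
  have hcount := cons1_add_card_filter_mem_consecutivePairs (fun j i => A j (ℓ i)) z
    (fun j => (Sym2.isDiag_map hpos).not.2 (G.not_isDiag_of_mem_edgeSet (e j).2))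
    (fun j => rowExt_comp_perm_eq_true_iff (hA j) ℓ)
  have hsub : consecutivePairs n ⊆ univ.image z :=
    subset_image_of_card_le_card_filter hz (by rw [card_consecutivePairs]; omega)
  intro i hi
  obtain ⟨j, -, hj⟩ := mem_image.1 <| hsub <|
    (mk_mem_consecutivePairs_iff (Nat.lt_succ_self i)).2 ⟨rfl, hi⟩
  have hedge : (e j : Sym2 (Fin n)) = s(ℓ ⟨i, by omega⟩, ℓ ⟨i + 1, hi⟩) :=
    Sym2.map.injective hpos (by simpa [z, pos] using hj)
  rw [← SimpleGraph.mem_edgeSet, ← hedge]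
  exact (e j).2
end

section
/- Under the penalized distance D of the previous setting, any tour of the columns of A' whose induced permutation makes every C_k consecutive (k=1,...,q) and that starts/ends at the zero column has length at most 2q(2p+1) + 2p, while any tour whose induced permutation fails to make some C_k consecutive has length at least 2(q+1)(2p+1). -/
/-!
The length of a tour splits into a Hamming part and a penalty part. By the triangle inequality
through the zero column, the Hamming distance of two columns is at most the sum of their weights,
so the Hamming part of any tour is at most twice the total number of ones, `2p`.

Read the tour from the zero column. The penalty paid for `C_k` is `2p + 1` times the number of
switches of the indicator of the positions of `C_k`, a 0/1 sequence that starts and ends with `0`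
(the zero column lies in no `C_k`). It has at least two switches since `C_k ≠ ∅`, at most two
when `C_k` is consecutive, and at least four otherwise, as some `1, 0, 1` pattern then occurs.
-/

open Finset

/-- The set of columns C occupies a contiguous interval of positions in π(A). -/
def consecIn {n : ℕ} (π : Equiv.Perm (Fin n)) (C : Finset (Fin n)) : Prop :=
  ∃ a : ℕ, ∀ j : Fin n, π j ∈ C ↔ a ≤ (j : ℕ) ∧ (j : ℕ) < a + C.card

/-- The penalized distance on the columns of A' (A with a zero column appended). -/
def pDist {m n : ℕ} (A : Fin m → Fin n → Bool) (p q : ℕ) (C : Fin q → Finset (Fin n))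
    (a b : Fin (n + 1)) : ℕ :=
  colHam (appendZero A) a b +
    (2 * p + 1) *
      ∑ k, (if (a ∈ (C k).image Fin.castSucc ↔ b ∈ (C k).image Fin.castSucc) then 0 else 1)

open Classical in
noncomputable def switchCount (P : ℕ → Prop) (u v : ℕ) : ℕ :=
  #{t ∈ Ico u v | ¬(P t ↔ P (t + 1))}

section switchCount

variable {P Q : ℕ → Prop} {u v w : ℕ}

theorem switchCount_congr (h : ∀ i, u ≤ i → i ≤ v → (P i ↔ Q i)) :
    switchCount P u v = switchCount Q u v := by
  classical
  unfold switchCount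
  refine congrArg card (filter_congr fun t ht => ?_)
  rw [mem_Ico] at ht
  rw [h t ht.1 ht.2.le, h (t + 1) (by omega) ht.2]

theorem switchCount_add (huv : u ≤ v) (hvw : v ≤ w) :
    switchCount P u w = switchCount P u v + switchCount P v w := by
  classical
  unfold switchCount
  rw [← Ico_union_Ico_eq_Ico huv hvw, filter_union, card_union_of_disjoint]
  exact disjoint_filter_filter (Ico_disjoint_Ico_consecutive u v w)

theorem one_le_switchCount (huv : u ≤ v) (h : ¬(P u ↔ P v)) : 1 ≤ switchCount P u v := by
  induction v, huv using Nat.le_induction with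
  | base => exact absurd Iff.rfl h
  | succ v huv ih =>
    rw [switchCount_add huv (Nat.le_add_right v 1)]
    by_cases hv : P u ↔ P v
    · suffices 0 < switchCount P v (v + 1) by omega
      classical
      refine card_pos.mpr ⟨v, ?_⟩
      simp only [mem_filter, mem_Ico]
      exact ⟨⟨le_rfl, v.lt_succ_self⟩, fun h' => h (hv.trans h')⟩
    · linarith [ih hv]

theorem two_le_switchCount (huv : u ≤ v) (hvw : v ≤ w) (h₁ : ¬(P u ↔ P v))
    (h₂ : ¬(P v ↔ P w)) : 2 ≤ switchCount P u w := by
  rw [switchCount_add huv hvw]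
  linarith [one_le_switchCount huv h₁, one_le_switchCount hvw h₂]

theorem switchCount_le_two_of_iff_Icc {L R : ℕ}
    (h : ∀ i, u ≤ i → i ≤ v → (P i ↔ L ≤ i ∧ i ≤ R)) :
    switchCount P u v ≤ 2 := by
  classical
  refine (card_le_card (t := {L - 1, R}) fun t ht => ?_).trans card_le_two
  rw [mem_filter, mem_Ico] at ht
  obtain ⟨⟨hut, htv⟩, hswitch⟩ := ht
  rw [h t hut htv.le, h (t + 1) (by omega) htv] at hswitch
  rw [mem_insert, mem_singleton]
  omega

end switchCount

open Fin.NatCast in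
theorem Fin.sum_univ_eq_sum_range_add {M : Type*} [AddCommMonoid M] {N : ℕ} [NeZero N]
    (f : Fin N → M) (k₀ : Fin N) : ∑ t, f t = ∑ i ∈ range N, f (k₀ + i) := by
  rw [← Fin.sum_univ_eq_sum_range, ← Equiv.sum_comp (Equiv.addLeft k₀) f]
  simp only [Equiv.coe_addLeft, Fin.cast_val_eq_self]

open Fin.NatCast in
theorem sum_ite_iff_eq_switchCount {N : ℕ} [NeZero N] (Q : Fin N → Prop) [DecidablePred Q]
    (k₀ : Fin N) :
    ∑ t, (if (Q t ↔ Q (t + 1)) then 0 else 1) = switchCount (fun i => Q (k₀ + i)) 0 N := by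
  classical
  rw [Fin.sum_univ_eq_sum_range_add _ k₀, switchCount, card_filter, ← range_eq_Ico]
  refine sum_congr rfl fun i _ => ?_
  rw [Nat.cast_succ, ← add_assoc]
  split_ifs <;> simp_all

theorem Finset.eq_Icc_min'_max' {α : Type*} [LinearOrder α] [LocallyFiniteOrder α]
    {T : Finset α} (hT : T.Nonempty) (h : ∀ x, T.min' hT ≤ x → x ≤ T.max' hT → x ∈ T) :
    T = Icc (T.min' hT) (T.max' hT) := by
  ext x
  refine ⟨fun hx => mem_Icc.2 ⟨min'_le T x hx, le_max' T x hx⟩, fun hx => ?_⟩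
  rw [mem_Icc] at hx
  exact h x hx.1 hx.2

/-- Positions are counted from 1, so that in a tour read from the zero column the column `π j`
sits at step `j + 1` and the zero column at steps `0` and `n + 1`. -/
def positions {n : ℕ} (π : Equiv.Perm (Fin n)) (C : Finset (Fin n)) : Finset ℕ :=
  C.image fun c => (π.symm c : ℕ) + 1

section positions

variable {n : ℕ} {π : Equiv.Perm (Fin n)} {C : Finset (Fin n)}

theorem mem_positions {i : ℕ} :
    i ∈ positions π C ↔ ∃ j : Fin n, π j ∈ C ∧ (j : ℕ) + 1 = i := by
  simp only [positions, mem_image]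
  exact ⟨fun ⟨c, hc, hi⟩ => ⟨π.symm c, by simpa using hc, hi⟩,
    fun ⟨j, hj, hi⟩ => ⟨π j, hj, by simpa using hi⟩⟩

theorem succ_mem_positions (j : Fin n) : (j : ℕ) + 1 ∈ positions π C ↔ π j ∈ C := by
  rw [mem_positions]
  exact ⟨fun ⟨j', hj', h⟩ => by rwa [show j' = j from Fin.ext (by omega)] at hj',
    fun hj => ⟨j, hj, rfl⟩⟩

theorem positions_subset_Icc : positions π C ⊆ Icc 1 n := by
  intro i hi
  obtain ⟨j, -, rfl⟩ := mem_positions.1 hi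
  rw [mem_Icc]
  omega

theorem card_positions : #(positions π C) = #C :=
  card_image_of_injective C fun a b h => π.symm.injective (Fin.ext (by simpa using h))

theorem consecIn_of_positions_eq_Icc {lo hi : ℕ} (hlo : 1 ≤ lo)
    (h : positions π C = Icc lo hi) : consecIn π C := by
  have hcard : #C = hi + 1 - lo := by rw [← card_positions, h, Nat.card_Icc]
  refine ⟨lo - 1, fun j => ?_⟩
  rw [← succ_mem_positions, h, mem_Icc, hcard]
  omega

theorem two_le_switchCount_positions (hC : C.Nonempty) :
    2 ≤ switchCount (· ∈ positions π C) 0 (n + 1) := by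
  obtain ⟨c, hc⟩ := hC
  have hmem : (π.symm c : ℕ) + 1 ∈ positions π C :=
    (succ_mem_positions _).2 (by simpa using hc)
  have hend : ∀ i ∈ positions π C, 0 < i ∧ i < n + 1 := fun i hi => by
    have := mem_Icc.1 (positions_subset_Icc hi)
    omega
  refine two_le_switchCount (v := (π.symm c : ℕ) + 1) (by omega) (by omega) ?_ ?_
  · exact fun h => (hend 0 (h.2 hmem)).1.false
  · exact fun h => (hend _ (h.1 hmem)).2.false

theorem switchCount_positions_le_two (h : consecIn π C) :
    switchCount (· ∈ positions π C) 0 (n + 1) ≤ 2 := by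
  obtain ⟨a, ha⟩ := h
  refine switchCount_le_two_of_iff_Icc (L := a + 1) (R := min n (a + #C)) fun i _ _ => ?_
  rw [mem_positions]
  constructor
  · rintro ⟨j, hj, rfl⟩
    have := (ha j).1 hj
    omega
  · intro hi
    exact ⟨⟨i - 1, by omega⟩, (ha _).2 (by simp only; omega), by simp only; omega⟩

theorem four_le_switchCount_positions (hC : C.Nonempty) (h : ¬consecIn π C) :
    4 ≤ switchCount (· ∈ positions π C) 0 (n + 1) := by
  set T := positions π C
  have hT : T.Nonempty := by rw [← card_pos, card_positions]; exact hC.card_pos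
  have hbounds : ∀ i ∈ T, 1 ≤ i ∧ i ≤ n := fun i hi => mem_Icc.1 (positions_subset_Icc hi)
  have hlo := hbounds _ (T.min'_mem hT)
  have hhi := hbounds _ (T.max'_mem hT)
  obtain ⟨g, hlog, hghi, hg⟩ : ∃ g, T.min' hT ≤ g ∧ g ≤ T.max' hT ∧ g ∉ T := by
    by_contra! hgap
    exact h (consecIn_of_positions_eq_Icc hlo.1 (T.eq_Icc_min'_max' hT hgap))
  have h0 : 0 ∉ T := fun h0 => by have := hbounds 0 h0; omega
  have hend : n + 1 ∉ T := fun hend => by have := hbounds _ hend; omega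
  have hleft := two_le_switchCount (P := (· ∈ T)) (u := 0) (w := g) (Nat.zero_le _) hlog
    (by simp [h0, T.min'_mem hT]) (by simp [hg, T.min'_mem hT])
  have hright := two_le_switchCount (P := (· ∈ T)) (w := n + 1) hghi (by omega)
    (by simp [hg, T.max'_mem hT]) (by simp [hend, T.max'_mem hT])
  rw [switchCount_add (Nat.zero_le g) (by omega)]
  omega

end positions

def colWeight {m N : ℕ} (B : Fin m → Fin N → Bool) (c : Fin N) : ℕ :=
  #{i | B i c = true}

theorem colHam_le_colWeight_add {m N : ℕ} (B : Fin m → Fin N → Bool) (a b : Fin N) :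
    colHam B a b ≤ colWeight B a + colWeight B b := by
  have hzero : ∀ c, hammingDist (fun i => B i c) (fun _ => false) = colWeight B c := by
    intro c
    simp [hammingDist, colWeight]
  calc colHam B a b
      ≤ hammingDist (fun i => B i a) (fun _ => false) +
          hammingDist (fun _ => false) (fun i => B i b) := hammingDist_triangle _ _ _
    _ = colWeight B a + colWeight B b := by rw [hammingDist_comm (fun _ => false), hzero, hzero]

theorem sum_colWeight_appendZero {m n : ℕ} (A : Fin m → Fin n → Bool) :
    ∑ c, colWeight (appendZero A) c = ∑ i, #{j | A i j = true} := by
  have hlast : colWeight (appendZero A) (Fin.last n) = 0 := by simp [colWeight, appendZero]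
  have hcast : ∀ c, colWeight (appendZero A) c.castSucc = #{i | A i c = true} := by
    simp [colWeight, appendZero]
  rw [Fin.sum_univ_castSucc, hlast, add_zero]
  simp only [hcast]
  exact sum_card_bipartiteAbove_eq_sum_card_bipartiteBelow _

theorem sum_tour_le_two_mul_sum {N : ℕ} [NeZero N] (σ : Equiv.Perm (Fin N))
    (d : Fin N → Fin N → ℕ) (w : Fin N → ℕ) (h : ∀ a b, d a b ≤ w a + w b) :
    ∑ t, d (σ t) (σ (t + 1)) ≤ 2 * ∑ c, w c := by
  calc ∑ t, d (σ t) (σ (t + 1))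
      ≤ ∑ t, w (σ t) + ∑ t, w (((Equiv.addRight 1).trans σ) t) := by
        rw [← sum_add_distrib]
        exact sum_le_sum fun t _ => h _ _
    _ = 2 * ∑ c, w c := by rw [Equiv.sum_comp σ w, Equiv.sum_comp _ w, two_mul]

open Fin.NatCast in
theorem sum_pDist_eq {m n q : ℕ} (A : Fin m → Fin n → Bool) (p : ℕ)
    (C : Fin q → Finset (Fin n)) (σ : Equiv.Perm (Fin (n + 1))) (k₀ : Fin (n + 1)) :
    ∑ t, pDist A p q C (σ t) (σ (t + 1)) =
      ∑ t, colHam (appendZero A) (σ t) (σ (t + 1)) +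
        (2 * p + 1) *
          ∑ k, switchCount (fun i => σ (k₀ + i) ∈ (C k).image Fin.castSucc) 0 (n + 1) := by
  simp only [pDist, sum_add_distrib, ← mul_sum]
  rw [sum_comm]
  congr 2
  exact sum_congr rfl fun k _ =>
    sum_ite_iff_eq_switchCount (fun x => σ x ∈ (C k).image Fin.castSucc) k₀

open Fin.NatCast in
theorem mem_image_castSucc_iff_mem_positions {n : ℕ} {σ : Equiv.Perm (Fin (n + 1))}
    {k₀ : Fin (n + 1)} (hk : σ k₀ = Fin.last n) {π : Equiv.Perm (Fin n)}
    (hπ : ∀ j : Fin n, (σ (k₀ + (((j : ℕ) + 1 : ℕ) : Fin (n + 1))) : ℕ) = π j)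
    (S : Finset (Fin n)) {i : ℕ} (hi : i ≤ n + 1) :
    σ (k₀ + i) ∈ S.image Fin.castSucc ↔ i ∈ positions π S := by
  by_cases hin : 1 ≤ i ∧ i ≤ n
  · obtain ⟨j, rfl⟩ : ∃ j, i = j + 1 := ⟨i - 1, by omega⟩
    have hj : j < n := by omega
    have hσ : σ (k₀ + ((j + 1 : ℕ) : Fin (n + 1))) = Fin.castSucc (π ⟨j, hj⟩) :=
      Fin.ext (hπ ⟨j, hj⟩)
    rw [hσ, show j + 1 = ((⟨j, hj⟩ : Fin n) : ℕ) + 1 from rfl, succ_mem_positions]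
    simp only [mem_image, Fin.castSucc_inj, exists_eq_right]
  · have hσ : σ (k₀ + i) = Fin.last n := by
      obtain rfl | rfl : i = 0 ∨ i = n + 1 := by omega
      · simpa using hk
      · simpa using hk
    simp only [hσ, mem_image, Fin.castSucc_ne_last, and_false, exists_false, false_iff]
    exact fun h => hin (mem_Icc.1 (positions_subset_Icc h))

theorem two_mul_card_add_two_le_sum {ι : Type*} [Fintype ι] (X : ι → ℕ)
    (h : ∀ k, 2 ≤ X k) {k' : ι} (hk' : 4 ≤ X k') : 2 * Fintype.card ι + 2 ≤ ∑ k, X k := by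
  classical
  have hrest : ∑ _k ∈ univ.erase k', 2 ≤ ∑ k ∈ univ.erase k', X k :=
    sum_le_sum fun k _ => h k
  have hcard : ∑ _k : ι, 2 = 2 * Fintype.card ι := by simp [mul_comm]
  rw [← add_sum_erase _ _ (mem_univ k')] at hcard ⊢
  omega

open Fin.NatCast in
/-- a tour whose induced permutation makes every C_k consecutive has
length at most 2q(2p+1) + 2p, while a tour whose induced permutation fails to make
some C_k consecutive has length at least 2(q+1)(2p+1). -/
theorem stmt11 (m n q : ℕ) (A : Fin m → Fin n → Bool)
    (p : ℕ) (hp : p = ∑ i, (Finset.univ.filter (fun j => A i j = true)).card)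
    (C : Fin q → Finset (Fin n)) (hCne : ∀ k, (C k).Nonempty)
    (σ : Equiv.Perm (Fin (n + 1)))
    (k₀ : Fin (n + 1)) (hk : σ k₀ = Fin.last n)
    (π : Equiv.Perm (Fin n))
    (hπ : ∀ j : Fin n, ((σ (k₀ + ((((j : ℕ) + 1 : ℕ)) : Fin (n + 1)))) : ℕ) = (π j : ℕ)) :
    ((∀ k, consecIn π (C k)) →
        ∑ k : Fin (n + 1), pDist A p q C (σ k) (σ (k + 1)) ≤
          2 * q * (2 * p + 1) + 2 * p) ∧
      ((¬ ∀ k, consecIn π (C k)) →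
        2 * (q + 1) * (2 * p + 1) ≤
          ∑ k : Fin (n + 1), pDist A p q C (σ k) (σ (k + 1))) := by
  set X : Fin q → ℕ := fun k => switchCount (· ∈ positions π (C k)) 0 (n + 1)
  have hsplit : ∑ t, pDist A p q C (σ t) (σ (t + 1)) =
      ∑ t, colHam (appendZero A) (σ t) (σ (t + 1)) + (2 * p + 1) * ∑ k, X k := by
    rw [sum_pDist_eq A p C σ k₀]
    congr 2
    refine sum_congr rfl fun k _ => switchCount_congr fun i _ hi => ?_
    exact mem_image_castSucc_iff_mem_positions hk hπ (C k) hi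
  have hham : ∑ t, colHam (appendZero A) (σ t) (σ (t + 1)) ≤ 2 * p := by
    rw [hp, ← sum_colWeight_appendZero]
    exact sum_tour_le_two_mul_sum σ _ _ (colHam_le_colWeight_add _)
  refine ⟨fun hcons => ?_, fun hncons => ?_⟩
  · have hX : ∑ k, X k ≤ 2 * q :=
      (sum_le_card_nsmul univ X 2 fun k _ => switchCount_positions_le_two (hcons k)).trans_eq
        (by simp [mul_comm])
    calc ∑ t, pDist A p q C (σ t) (σ (t + 1))
        ≤ 2 * p + (2 * p + 1) * (2 * q) := hsplit ▸ add_le_add hham (Nat.mul_le_mul_left _ hX)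
      _ = 2 * q * (2 * p + 1) + 2 * p := by ring
  · obtain ⟨k', hk'⟩ := not_forall.mp hncons
    have hX : 2 * q + 2 ≤ ∑ k, X k := by
      simpa using two_mul_card_add_two_le_sum X (fun k => two_le_switchCount_positions (hCne k))
        (four_le_switchCount_positions (hCne k') hk')
    calc 2 * (q + 1) * (2 * p + 1)
        = (2 * p + 1) * (2 * q + 2) := by ring
      _ ≤ (2 * p + 1) * ∑ k, X k := Nat.mul_le_mul_left _ hX
      _ ≤ ∑ t, pDist A p q C (σ t) (σ (t + 1)) := hsplit ▸ Nat.le_add_left _ _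
end

section
/- Let A be a binary matrix with n columns, A' the matrix with a zero column appended, and D the Hamming distance matrix of the columns of A'. For every column permutation π of A, the tour of A' consisting of the zero column followed by the columns of A in the order π has length exactly 2·cons1(π(A)); hence the minimum tour length over all tours of A' equals 2·min_π cons1(π(A)). -/
/-!
Along the tour "zero column, then the columns of `A` in the order `π`", row `i` of `A'` reads
`0, A i (π 0), …, A i (π (n-1))` and then wraps back to `0`. The row's contribution to the tour
length is the number of cyclic changes of this word, and a cyclic binary word starting at `0` has
exactly twice as many changes as it has `0 → 1` rises, i.e. blocks of ones. Since every tour can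
be rotated to start at the zero column, the tour lengths are exactly the numbers
`2 * cons1 (π(A))`.
-/

open Finset

/-- The tour of the columns of A' consisting of the zero column followed by the
columns of A in the order π. -/
def zeroTour {n : ℕ} (π : Equiv.Perm (Fin n)) : Fin (n + 1) → Fin (n + 1) :=
  fun k => if h : (k : ℕ) = 0 then Fin.last n
    else (π ⟨(k : ℕ) - 1, by have := k.isLt; omega⟩).castSucc

def zeroPad (n : ℕ) (r : Fin n → Bool) : ℕ → Bool
  | 0 => false
  | j + 1 => rowExt n r j

theorem card_changes_add_toNat_eq_two_mul_card_rises (g : ℕ → Bool) (h0 : g 0 = false) (n : ℕ) :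
    #{j ∈ range n | g j ≠ g (j + 1)} + (g n).toNat =
      2 * #{j ∈ range n | g j = false ∧ g (j + 1) = true} := by
  induction n with
  | zero => simp [h0]
  | succ n ih =>
    simp only [range_add_one, filter_insert]
    cases hn : g n <;> cases hn1 : g (n + 1) <;>
      simp_all [card_insert_of_notMem]; omega

theorem cons1Row_eq_card_rises_zeroPad (n : ℕ) (r : Fin n → Bool) :
    cons1Row n r = #{j ∈ range n | zeroPad n r j = false ∧ zeroPad n r (j + 1) = true} := by
  unfold cons1Row
  congr 1
  refine filter_congr fun j _ => ?_
  cases j <;> simp [zeroPad, and_comm]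

theorem zeroPad_val_add_one (n : ℕ) (r : Fin n → Bool) (k : Fin (n + 1)) :
    zeroPad n r ↑(k + 1) = zeroPad n r (k + 1) := by
  rw [Fin.val_add_one]
  split_ifs with hk
  · simp [hk, zeroPad, rowExt]
  · rfl

theorem card_cyclic_changes_zeroPad (n : ℕ) (r : Fin n → Bool) :
    #{k : Fin (n + 1) | zeroPad n r k ≠ zeroPad n r ↑(k + 1)} = 2 * cons1Row n r := by
  have hlast : zeroPad n r (n + 1) = false := by simp [zeroPad, rowExt]
  have key := card_changes_add_toNat_eq_two_mul_card_rises (zeroPad n r) rfl (n + 1)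
  have no_rise_at_end : #{j ∈ range (n + 1) | zeroPad n r j = false ∧ zeroPad n r (j + 1) = true} =
      #{j ∈ range n | zeroPad n r j = false ∧ zeroPad n r (j + 1) = true} := by
    rw [range_add_one, filter_insert, if_neg (by simp [hlast])]
  rw [hlast, no_rise_at_end, Bool.toNat_false, add_zero] at key
  rw [cons1Row_eq_card_rises_zeroPad, ← key, card_filter, card_filter,
    ← Fin.sum_univ_eq_sum_range (fun j => if zeroPad n r j ≠ zeroPad n r (j + 1) then 1 else 0)]
  simp only [zeroPad_val_add_one]

theorem appendZero_zeroTour {m n : ℕ} (A : Fin m → Fin n → Bool) (π : Equiv.Perm (Fin n))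
    (i : Fin m) (k : Fin (n + 1)) :
    appendZero A i (zeroTour π k) = zeroPad n (fun j => A i (π j)) k := by
  obtain ⟨_ | k, hk⟩ := k
  · simp [zeroTour, appendZero, zeroPad]
  · simp [zeroTour, appendZero, zeroPad, rowExt, Nat.lt_of_succ_lt_succ hk]

theorem sum_colHam_zeroTour {m n : ℕ} (A : Fin m → Fin n → Bool) (π : Equiv.Perm (Fin n)) :
    ∑ k : Fin (n + 1), colHam (appendZero A) (zeroTour π k) (zeroTour π (k + 1)) =
      2 * cons1 (fun i j => A i (π j)) := by
  simp only [colHam, hammingDist, card_filter, appendZero_zeroTour]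
  rw [sum_comm, cons1, mul_sum]
  refine sum_congr rfl fun i _ => ?_
  rw [← card_cyclic_changes_zeroPad, card_filter]

theorem sum_comp_add_right_cyclic {α M : Type*} [AddCommMonoid M] {N : ℕ} (d : α → α → M)
    (f : Fin (N + 1) → α) (p : Fin (N + 1)) :
    ∑ k, d (f (k + p)) (f (k + 1 + p)) = ∑ k, d (f k) (f (k + 1)) := by
  simpa only [Equiv.coe_addRight, add_right_comm] using
    Equiv.sum_comp (Equiv.addRight p) fun k => d (f k) (f (k + 1))

theorem zeroTour_eq_cons {n : ℕ} (π : Equiv.Perm (Fin n)) :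
    zeroTour π = Fin.cons (Fin.last n) fun j => (π j).castSucc := by
  funext k
  refine Fin.cases ?_ (fun j => ?_) k <;> simp [zeroTour]

theorem zeroTour_injective {n : ℕ} (π : Equiv.Perm (Fin n)) : Function.Injective (zeroTour π) := by
  rw [zeroTour_eq_cons, Fin.cons_injective_iff]
  exact ⟨by simp [Fin.castSucc_ne_last], (Fin.castSucc_injective n).comp π.injective⟩

noncomputable def zeroTourPerm {n : ℕ} (π : Equiv.Perm (Fin n)) : Equiv.Perm (Fin (n + 1)) :=
  Equiv.ofBijective (zeroTour π) (Finite.injective_iff_bijective.mp (zeroTour_injective π))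

theorem exists_zeroTour_eq {n : ℕ} (σ : Equiv.Perm (Fin (n + 1))) (h0 : σ 0 = Fin.last n) :
    ∃ π : Equiv.Perm (Fin n), zeroTour π = σ := by
  have hne (j : Fin n) : σ j.succ ≠ Fin.last n :=
    fun hj => Fin.succ_ne_zero j (σ.injective (hj.trans h0.symm))
  have hinj : Function.Injective fun j => (σ j.succ).castPred (hne j) := fun j j' h =>
    Fin.succ_injective n (σ.injective (Fin.castPred_inj.mp h))
  refine ⟨Equiv.ofBijective _ (Finite.injective_iff_bijective.mp hinj), ?_⟩
  rw [zeroTour_eq_cons, ← h0]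
  exact Fin.cons_self_tail σ

theorem Nat.sInf_image_mul_left (a : ℕ) {s : Set ℕ} (hs : s.Nonempty) :
    sInf ((a * ·) '' s) = a * sInf s :=
  (Monotone.map_csInf_of_continuousAt continuous_of_discreteTopology.continuousAt
    (fun _ _ h => Nat.mul_le_mul_left a h) hs).symm

theorem tourLengths_eq_image {m n : ℕ} (A : Fin m → Fin n → Bool) :
    {L : ℕ | ∃ σ : Equiv.Perm (Fin (n + 1)),
        L = ∑ k : Fin (n + 1), colHam (appendZero A) (σ k) (σ (k + 1))} =
      (2 * ·) '' {c : ℕ | ∃ π : Equiv.Perm (Fin n), c = cons1 (fun i j => A i (π j))} := by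
  ext L
  constructor
  · rintro ⟨σ, rfl⟩
    -- rotate the tour so that it starts at the zero column
    obtain ⟨π, hπ⟩ := exists_zeroTour_eq ((Equiv.addRight (σ⁻¹ (Fin.last n))).trans σ)
      (by simp)
    refine ⟨_, ⟨π, rfl⟩, ?_⟩
    change 2 * _ = _
    rw [← sum_colHam_zeroTour, hπ]
    exact sum_comp_add_right_cyclic (colHam (appendZero A)) σ _
  · rintro ⟨_, ⟨π, rfl⟩, rfl⟩
    exact ⟨zeroTourPerm π, (sum_colHam_zeroTour A π).symm⟩

/-- the tour "zero column, then the columns in order π" has length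
exactly 2·cons1(π(A)); hence the minimum tour length equals 2·min_π cons1(π(A)). -/
theorem stmt19 (m n : ℕ) (A : Fin m → Fin n → Bool) :
    (∀ π : Equiv.Perm (Fin n),
        ∑ k : Fin (n + 1), colHam (appendZero A) (zeroTour π k) (zeroTour π (k + 1)) =
          2 * cons1 (fun i j => A i (π j))) ∧
      sInf {L : ℕ | ∃ σ : Equiv.Perm (Fin (n + 1)),
          L = ∑ k : Fin (n + 1), colHam (appendZero A) (σ k) (σ (k + 1))} =
        2 * sInf {c : ℕ | ∃ π : Equiv.Perm (Fin n), c = cons1 (fun i j => A i (π j))} := by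
  refine ⟨sum_colHam_zeroTour A, ?_⟩
  rw [tourLengths_eq_image]
  exact Nat.sInf_image_mul_left 2 ⟨_, 1, rfl⟩
end
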